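/- The maximum over input distributions q ∈ [0,1] of the secrecy rate of a binary symmetric broadcast channel, max_q { I(X;Y_b) - I(X;Y_e) }, where Bob's BSC has crossover probability ε_b and Eve's has ε_e with 0 < ε_b ≤ ε_e < 1/2, is attained at q = 1/2 and equals H(ε_e) - H(ε_b). -/
import Mathlib


noncomputable def binEnt (p : ℝ) : ℝ := -(p * Real.logb 2 p) - (1 - p) * Real.logb 2 (1 - p)

/-- Mutual information of a BSC with crossover probability ε and P(X=1)=q. -/
noncomputable def bscMI (q ε : ℝ) : ℝ := binEnt (q * (1 - ε) + (1 - q) * ε) - binEnt ε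

lemma binEnt_eq (p : ℝ) : binEnt p = Real.binEntropy p / Real.log 2 := by
  simp only [binEnt, Real.binEntropy, Real.logb, Real.log_inv]
  ring

lemma binEntropy_mono {x y : ℝ} (hx : 0 ≤ x) (hxy : x ≤ y) (hy : y ≤ 1/2) :
    Real.binEntropy x ≤ Real.binEntropy y := by
  rcases eq_or_lt_of_le hxy with rfl | h
  · exact le_refl _
  · exact (Real.binEntropy_strictMonoOn ⟨hx, by linarith⟩
      ⟨by linarith, by rw [show (2:ℝ)⁻¹ = 1/2 by norm_num]; exact hy⟩ h).le

lemma binEntropy_abs_le {x y : ℝ} (hx0 : 0 ≤ x) (hx1 : x ≤ 1)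
    (h : |y - 1/2| ≤ |x - 1/2|) : Real.binEntropy x ≤ Real.binEntropy y := by
  have hux : x = 1/2 - |x - 1/2| ∨ x = 1 - (1/2 - |x - 1/2|) := by
    rcases abs_cases (x - 1/2) with ⟨h1, _⟩ | ⟨h1, _⟩
    · right; linarith
    · left; linarith
  have huy : y = 1/2 - |y - 1/2| ∨ y = 1 - (1/2 - |y - 1/2|) := by
    rcases abs_cases (y - 1/2) with ⟨h1, _⟩ | ⟨h1, _⟩
    · right; linarith
    · left; linarith
  have hex : Real.binEntropy x = Real.binEntropy (1/2 - |x - 1/2|) := by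
    rcases hux with h1 | h1
    · rw [← h1]
    · conv_lhs => rw [h1]
      rw [Real.binEntropy_one_sub]
  have hey : Real.binEntropy y = Real.binEntropy (1/2 - |y - 1/2|) := by
    rcases huy with h1 | h1
    · rw [← h1]
    · conv_lhs => rw [h1]
      rw [Real.binEntropy_one_sub]
  rw [hex, hey]
  have hxb : |x - 1/2| ≤ 1/2 := by
    rw [abs_le]; constructor <;> linarith
  exact binEntropy_mono (by linarith) (by linarith) (by linarith [abs_nonneg (y - 1/2)])

theorem bsbc_secrecy_capacity (εb εe : ℝ) (h0 : 0 < εb) (hbe : εb ≤ εe) (he : εe < 1/2) :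
    (∀ q ∈ Set.Icc (0:ℝ) 1, bscMI q εb - bscMI q εe ≤ bscMI (1/2) εb - bscMI (1/2) εe) ∧
    bscMI (1/2) εb - bscMI (1/2) εe = binEnt εe - binEnt εb := by
  have hlog2 : (0:ℝ) < Real.log 2 := Real.log_pos (by norm_num)
  have hmid : ∀ ε : ℝ, (1/2 : ℝ) * (1 - ε) + (1 - 1/2) * ε = 1/2 := by intro ε; ring
  constructor
  · intro q hq
    obtain ⟨hq0, hq1⟩ := hq
    set x := q * (1 - εb) + (1 - q) * εb with hxdef
    set y := q * (1 - εe) + (1 - q) * εe with hydef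
    have hkey : Real.binEntropy x ≤ Real.binEntropy y := by
      apply binEntropy_abs_le
      · nlinarith
      · nlinarith
      · have hx : x - 1/2 = (q - 1/2) * (1 - 2*εb) := by rw [hxdef]; ring
        have hy : y - 1/2 = (q - 1/2) * (1 - 2*εe) := by rw [hydef]; ring
        rw [hx, hy, abs_mul, abs_mul]
        apply mul_le_mul_of_nonneg_left _ (abs_nonneg _)
        rw [abs_of_nonneg (by linarith), abs_of_nonneg (by linarith)]
        linarith
    simp only [bscMI, hmid]
    rw [binEnt_eq x, binEnt_eq y]
    have h2 : Real.binEntropy x / Real.log 2 ≤ Real.binEntropy y / Real.log 2 := by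
      gcongr
    linarith
  · simp only [bscMI, hmid]
    ring
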